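/- Let X_i ⊂ ℝ be compact intervals, μ_i ∈ P(X_i) for i = 1, ..., d, let α : [0,1] → [0,∞) be nondecreasing and bounded, and let b(x_1, ..., x_d) = x_1 + ... + x_d. Then the maximum of R_α(b_# γ) over γ ∈ Γ(μ_1, ..., μ_d) is attained by the comonotone coupling (F_{μ_1}^{-1}, ..., F_{μ_d}^{-1})_# Leb_{[0,1]}, and the maximal value equals ∫_0^1 α(m) (F_{μ_1}^{-1}(m) + ... + F_{μ_d}^{-1}(m)) dm = Σ_{i=1}^d R_α(μ_i). -/

import Mathlib

/-!
The quantile function `q_ν` of a law `ν` with compact support carries the uniform law on `[0,1]`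
to `ν`, so the comonotone coupling has marginals `μ i`. The function `∑ i, q_{μ i}` is monotone
on `(0,1]`, hence a.e. equal to the quantile function of its own law, the law of `b` under the
comonotone coupling; this gives the value `∫ α ∑ i, q_{μ i}`.

For optimality, the layer-cake formula writes `R_α(ν)` as an integral over `s` of the tail
integrals `∫_{α > s} q_ν`, taken over upper sets of `[0,1]`. Over an upper set `U`, the tail
integral equals `min_z (z |U| + E_ν (X - z)⁺)` (Rockafellar–Uryasev), and
`(∑ X_i - ∑ z_i)⁺ ≤ ∑ (X_i - z_i)⁺`; so tail integrals, and therefore `R_α`, are subadditive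
along every coupling, and the comonotone coupling attains the bound `∑ i, R_α(μ i)`.
-/

open MeasureTheory Set Filter Topology ProbabilityTheory

noncomputable def quantile (μ : Measure ℝ) (m : ℝ) : ℝ :=
  sInf {x : ℝ | ENNReal.ofReal m ≤ μ (Iic x)}

noncomputable def lebI : Measure ℝ := volume.restrict (Icc (0:ℝ) 1)

noncomputable def specRisk (α : ℝ → ℝ) (μ : Measure ℝ) : ℝ :=
  ∫ m in Icc (0:ℝ) 1, quantile μ m * α m

lemma MonotoneOn.comp_projIcc {X Y : Type*} [LinearOrder X] [Preorder Y] {f : X → Y} {a b : X}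
    (hf : MonotoneOn f (Icc a b)) (h : a ≤ b) : Monotone fun x => f (projIcc a b h x) :=
  fun _ _ hxy => hf (projIcc a b h _).2 (projIcc a b h _).2 (monotone_projIcc h hxy)

lemma StieltjesFunction.le_apply_csInf (f : StieltjesFunction ℝ) {y : ℝ}
    (hne : {x | y ≤ f x}.Nonempty) :
    y ≤ f (sInf {x | y ≤ f x}) := by
  refine ge_of_tendsto ((f.right_continuous _).mono Ioi_subset_Ici_self) ?_
  filter_upwards [self_mem_nhdsWithin] with x hx
  obtain ⟨x', hx', hx'x⟩ := exists_lt_of_csInf_lt hne hx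
  exact hx'.trans (f.mono hx'x.le)

lemma exists_separating_of_monotoneOn {X : Type*} [LinearOrder X] {f : X → ℝ} {s U : Set X}
    {A C : ℝ}
    (hf : MonotoneOn f s) (hfs : MapsTo f s (Icc A C)) (hU : IsUpperSet U) :
    ∃ z, ∀ x ∈ s, (x ∈ U → z ≤ f x) ∧ (x ∉ U → f x ≤ z) := by
  have hbdd : BddAbove (insert A (f '' (s \ U))) := by
    refine ⟨max A C, ?_⟩
    rintro _ (rfl | ⟨y, hy, rfl⟩)
    · exact le_max_left _ _
    · exact (hfs hy.1).2.trans (le_max_right _ _)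
  refine ⟨sSup (insert A (f '' (s \ U))), fun x hx => ⟨fun hxU => ?_, fun hxU => ?_⟩⟩
  · refine csSup_le (insert_nonempty _ _) ?_
    rintro _ (rfl | ⟨y, hy, rfl⟩)
    · exact (hfs hx).1
    · exact hf hy.1 hx (not_le.1 fun hxy => hy.2 (hU hxy hxU)).le
  · exact le_csSup hbdd (mem_insert_of_mem _ ⟨x, ⟨hx, hxU⟩, rfl⟩)

section RockafellarUryasev

variable {X : Type*} [MeasurableSpace X] {μ : Measure X} [IsFiniteMeasure μ] {f : X → ℝ}
  {U : Set X}

lemma mul_measureReal_add_integral_max_sub (hf : Integrable f μ) (hU : MeasurableSet U) (z : ℝ) :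
    z * μ.real U + ∫ x, max (f x - z) 0 ∂μ
      = ∫ x, (U.indicator (fun _ => z) x + max (f x - z) 0) ∂μ := by
  have hpos : Integrable (fun x => max (f x - z) 0) μ := (hf.sub (integrable_const z)).pos_part
  rw [integral_add ((integrable_const z).indicator hU) hpos,
    integral_indicator_const z hU, smul_eq_mul, mul_comm]

-- Rockafellar–Uryasev: pointwise, `1_U f ≤ 1_U z + (f - z)⁺`, with equality where `z`
-- separates the values of `f` on `U` from those off `U`.
lemma setIntegral_le_mul_measureReal_add_integral_max_sub (hf : Integrable f μ)
    (hU : MeasurableSet U) (z : ℝ) :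
    ∫ x in U, f x ∂μ ≤ z * μ.real U + ∫ x, max (f x - z) 0 ∂μ := by
  rw [mul_measureReal_add_integral_max_sub hf hU, ← integral_indicator hU]
  refine integral_mono (hf.indicator hU)
    (((integrable_const z).indicator hU).add (hf.sub (integrable_const z)).pos_part) fun x => ?_
  by_cases hx : x ∈ U
  · simp only [indicator_of_mem hx]; linarith [le_max_left (f x - z) 0]
  · simp only [indicator_of_notMem hx, zero_add]; exact le_max_right _ _

lemma setIntegral_eq_mul_measureReal_add_integral_max_sub (hf : Integrable f μ)
    (hU : MeasurableSet U) {z : ℝ} (hz : ∀ᵐ x ∂μ, (x ∈ U → z ≤ f x) ∧ (x ∉ U → f x ≤ z)) :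
    ∫ x in U, f x ∂μ = z * μ.real U + ∫ x, max (f x - z) 0 ∂μ := by
  rw [mul_measureReal_add_integral_max_sub hf hU, ← integral_indicator hU]
  refine integral_congr_ae (hz.mono fun x ⟨hin, hout⟩ => ?_)
  by_cases hx : x ∈ U
  · simp only [indicator_of_mem hx, max_eq_left (sub_nonneg.2 (hin hx))]; ring
  · simp only [indicator_of_notMem hx, max_eq_right (sub_nonpos.2 (hout hx)), add_zero]

end RockafellarUryasev

section LayerCake

lemma indicator_superlevel_prod_apply {X : Type*} {g α : X → ℝ} (x : X) (s : ℝ) :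
    ({p : X × ℝ | p.2 < α p.1}.indicator fun p => g p.1) (x, s)
      = {x | s < α x}.indicator g x := by
  by_cases h : s < α x <;> simp [indicator, h]

variable {X : Type*} [MeasurableSpace X] {μ : Measure X} {g α : X → ℝ}

lemma integrable_indicator_superlevel_prod (hg : Integrable g μ) (hα : Measurable α) (M : ℝ) :
    Integrable ({p : X × ℝ | p.2 < α p.1}.indicator fun p => g p.1)
      (μ.prod (volume.restrict (Ioo 0 M))) :=
  (hg.comp_fst _).indicator (measurableSet_lt measurable_snd (hα.comp measurable_fst))

variable [SFinite μ]

lemma integrable_setIntegral_superlevel (hg : Integrable g μ) (hα : Measurable α) (M : ℝ) :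
    Integrable (fun s => ∫ x in {x | s < α x}, g x ∂μ) (volume.restrict (Ioo 0 M)) := by
  refine (integrable_indicator_superlevel_prod hg hα M).integral_prod_right.congr
    (ae_of_all _ fun s => ?_)
  simp only [indicator_superlevel_prod_apply]
  exact integral_indicator (measurableSet_lt measurable_const hα)

-- Layer cake: `α x = |(0, α x)|`, then Fubini.
lemma integral_mul_eq_integral_setIntegral_superlevel (hg : Integrable g μ) (hα : Measurable α)
    {M : ℝ} (hα0 : ∀ x, 0 ≤ α x) (hαM : ∀ x, α x ≤ M) :
    ∫ x, g x * α x ∂μ = ∫ s in Ioo (0:ℝ) M, ∫ x in {x | s < α x}, g x ∂μ := by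
  set F := {p : X × ℝ | p.2 < α p.1}.indicator fun p => g p.1
  have hlayer : ∀ x, g x * α x = ∫ s in Ioo (0:ℝ) M, F (x, s) := by
    intro x
    have hF : (fun s => F (x, s)) = (Iio (α x)).indicator fun _ => g x := by
      ext s; by_cases h : s < α x <;> simp [F, indicator, h]
    rw [hF, setIntegral_indicator measurableSet_Iio, setIntegral_const, Ioo_inter_Iio,
      min_eq_right (hαM x), Real.volume_real_Ioo_of_le (hα0 x), sub_zero, smul_eq_mul, mul_comm]
  calc ∫ x, g x * α x ∂μ
      = ∫ x, (∫ s in Ioo (0:ℝ) M, F (x, s)) ∂μ := integral_congr_ae (ae_of_all _ hlayer)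
    _ = ∫ s in Ioo (0:ℝ) M, ∫ x, F (x, s) ∂μ :=
        integral_integral_swap (f := fun x s => F (x, s))
          (integrable_indicator_superlevel_prod hg hα M)
    _ = ∫ s in Ioo (0:ℝ) M, ∫ x in {x | s < α x}, g x ∂μ := by
        simp only [F, indicator_superlevel_prod_apply]
        exact integral_congr_ae (ae_of_all _ fun s =>
          integral_indicator (measurableSet_lt measurable_const hα))

end LayerCake

-- The quantile function is only meaningful on `(0,1]`: at `m = 0` it is the junk value
-- `sInf univ = 0`.
lemma lebI_eq_restrict_Ioc : lebI = volume.restrict (Ioc 0 1) :=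
  Measure.restrict_congr_set Ioc_ae_eq_Icc.symm

instance isProbabilityMeasure_lebI : IsProbabilityMeasure lebI :=
  ⟨by simp [lebI]⟩

instance nullSingletonClass_lebI : NullSingletonClass lebI := by
  unfold lebI; infer_instance

lemma ae_mem_Ioc_lebI : ∀ᵐ m ∂lebI, m ∈ Ioc (0:ℝ) 1 := by
  rw [lebI_eq_restrict_Ioc]; exact ae_restrict_mem measurableSet_Ioc

lemma aemeasurable_lebI_of_monotoneOn {Q : ℝ → ℝ} (hQ : MonotoneOn Q (Ioc 0 1)) :
    AEMeasurable Q lebI := by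
  rw [lebI_eq_restrict_Ioc]
  exact aemeasurable_restrict_of_monotoneOn measurableSet_Ioc hQ

section Quantile

variable {ν : Measure ℝ} [IsProbabilityMeasure ν] {A C : ℝ}

lemma quantile_eq_sInf_cdf (m : ℝ) : quantile ν m = sInf {x | m ≤ cdf ν x} := by
  simp_rw [quantile, ← ofReal_cdf, ENNReal.ofReal_le_ofReal_iff (cdf_nonneg _ _)]

variable (hν : ∀ᵐ x ∂ν, x ∈ Icc A C)
include hν

lemma cdf_eq_zero_of_lt {x : ℝ} (hx : x < A) : cdf ν x = 0 := by
  rw [cdf_eq_real, measureReal_eq_zero_iff, measure_eq_zero_iff_ae_notMem]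
  filter_upwards [hν] with y hy hyx using (hy.1.trans hyx).not_gt hx

lemma cdf_eq_one_of_le {x : ℝ} (hx : C ≤ x) : cdf ν x = 1 := by
  have : ν (Iic x)ᶜ = 0 := by
    rw [measure_eq_zero_iff_ae_notMem]
    filter_upwards [hν] with y hy hyx using hyx (hy.2.trans hx)
  rw [cdf_eq_real, measureReal_def, (prob_compl_eq_zero_iff measurableSet_Iic).1 this,
    ENNReal.toReal_one]

lemma quantile_le_iff {m : ℝ} (hm : m ∈ Ioc 0 1) {x : ℝ} :
    quantile ν m ≤ x ↔ m ≤ cdf ν x := by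
  have hne : {x | m ≤ cdf ν x}.Nonempty :=
    ⟨C, by rw [mem_ofPred_eq, cdf_eq_one_of_le hν le_rfl]; exact hm.2⟩
  have hbdd : BddBelow {x | m ≤ cdf ν x} := by
    refine ⟨A, fun y hy => not_lt.1 fun hyA => ?_⟩
    rw [mem_ofPred_eq, cdf_eq_zero_of_lt hν hyA] at hy
    exact hm.1.not_ge hy
  rw [quantile_eq_sInf_cdf]
  exact ⟨fun h => ((cdf ν).le_apply_csInf hne).trans ((cdf ν).mono h),
    fun h => csInf_le hbdd h⟩

lemma le_cdf_quantile {m : ℝ} (hm : m ∈ Ioc 0 1) : m ≤ cdf ν (quantile ν m) :=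
  (quantile_le_iff hν hm).1 le_rfl

lemma quantile_mem_Icc {m : ℝ} (hm : m ∈ Ioc 0 1) : quantile ν m ∈ Icc A C := by
  refine ⟨not_lt.1 fun h => ?_, (quantile_le_iff hν hm).2 ?_⟩
  · have := le_cdf_quantile hν hm
    rw [cdf_eq_zero_of_lt hν h] at this
    exact hm.1.not_ge this
  · rw [cdf_eq_one_of_le hν le_rfl]; exact hm.2

lemma monotoneOn_quantile : MonotoneOn (quantile ν) (Ioc 0 1) := fun _ hm _ hm' hmm' =>
  (quantile_le_iff hν hm).2 (hmm'.trans (le_cdf_quantile hν hm'))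

lemma aemeasurable_quantile : AEMeasurable (quantile ν) lebI :=
  aemeasurable_lebI_of_monotoneOn (monotoneOn_quantile hν)

lemma map_quantile : lebI.map (quantile ν) = ν := by
  have := Measure.isProbabilityMeasure_map (μ := lebI) (aemeasurable_quantile hν)
  refine Measure.ext_of_Iic _ _ fun x => ?_
  have hpre : quantile ν ⁻¹' Iic x ∩ Ioc 0 1 = Ioc 0 (cdf ν x) := by
    ext m
    simp only [mem_inter_iff, mem_preimage, mem_Iic, mem_Ioc]
    constructor
    · rintro ⟨h, hm⟩; exact ⟨hm.1, (quantile_le_iff hν hm).1 h⟩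
    · rintro ⟨hm0, hm⟩
      have hm1 : m ≤ 1 := hm.trans (cdf_le_one _ x)
      exact ⟨(quantile_le_iff hν ⟨hm0, hm1⟩).2 hm, hm0, hm1⟩
  rw [Measure.map_apply_of_aemeasurable (aemeasurable_quantile hν) measurableSet_Iic,
    lebI_eq_restrict_Ioc, Measure.restrict_apply' measurableSet_Ioc, hpre, Real.volume_Ioc,
    sub_zero, ofReal_cdf]

end Quantile

section Comonotone

variable {Q : ℝ → ℝ} {A C : ℝ} (hQ : MonotoneOn Q (Ioc 0 1)) (hQAC : MapsTo Q (Ioc 0 1) (Icc A C))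
include hQ

lemma ofReal_cdf_map_lebI (x : ℝ) :
    ENNReal.ofReal (cdf (lebI.map Q) x) = volume (Q ⁻¹' Iic x ∩ Ioc 0 1) := by
  have := Measure.isProbabilityMeasure_map (μ := lebI) (aemeasurable_lebI_of_monotoneOn hQ)
  rw [ofReal_cdf, Measure.map_apply_of_aemeasurable (aemeasurable_lebI_of_monotoneOn hQ)
    measurableSet_Iic, lebI_eq_restrict_Ioc, Measure.restrict_apply' measurableSet_Ioc]

include hQAC

lemma ae_mem_Icc_map_lebI : ∀ᵐ x ∂lebI.map Q, x ∈ Icc A C :=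
  (ae_map_iff (aemeasurable_lebI_of_monotoneOn hQ) measurableSet_Icc).2
    (ae_mem_Ioc_lebI.mono hQAC)

lemma quantile_map_lebI_le {m m' : ℝ} (hm : m ∈ Ioc 0 1) (hm' : m' ∈ Icc m 1) :
    quantile (lebI.map Q) m ≤ Q m' := by
  have := Measure.isProbabilityMeasure_map (μ := lebI) (aemeasurable_lebI_of_monotoneOn hQ)
  rw [quantile_le_iff (ae_mem_Icc_map_lebI hQ hQAC) hm,
    ← ENNReal.ofReal_le_ofReal_iff (cdf_nonneg _ _), ofReal_cdf_map_lebI hQ]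
  calc ENNReal.ofReal m ≤ volume (Ioc 0 m') := by
        rw [Real.volume_Ioc, sub_zero]; exact ENNReal.ofReal_le_ofReal hm'.1
    _ ≤ volume (Q ⁻¹' Iic (Q m') ∩ Ioc 0 1) := by
        refine measure_mono fun y hy => ?_
        have hy1 : y ∈ Ioc (0:ℝ) 1 := ⟨hy.1, hy.2.trans hm'.2⟩
        exact ⟨hQ hy1 ⟨hm.1.trans_le hm'.1, hm'.2⟩ hy.2, hy1⟩

lemma le_quantile_map_lebI {m m' : ℝ} (hm : m ∈ Ioc 0 1) (hm' : m' ∈ Ioo 0 m) :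
    Q m' ≤ quantile (lebI.map Q) m := by
  have := Measure.isProbabilityMeasure_map (μ := lebI) (aemeasurable_lebI_of_monotoneOn hQ)
  by_contra! hlt
  have hcdf := le_cdf_quantile (ae_mem_Icc_map_lebI hQ hQAC) hm
  rw [← ENNReal.ofReal_le_ofReal_iff (cdf_nonneg _ _), ofReal_cdf_map_lebI hQ] at hcdf
  have : volume (Q ⁻¹' Iic (quantile (lebI.map Q) m) ∩ Ioc 0 1) ≤ volume (Ioc 0 m') := by
    refine measure_mono fun y ⟨hy, hy1⟩ => ⟨hy1.1, not_lt.1 fun hy' => ?_⟩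
    exact (hlt.trans_le (hQ ⟨hm'.1, hm'.2.le.trans hm.2⟩ hy1 hy'.le)).not_ge hy
  rw [Real.volume_Ioc, sub_zero] at this
  exact hm'.2.not_ge ((ENNReal.ofReal_le_ofReal_iff hm'.1.le).1 (hcdf.trans this))

lemma quantile_map_lebI_ae_eq : quantile (lebI.map Q) =ᵐ[lebI] Q := by
  have hE := hQ.countable_not_continuousWithinAt
  filter_upwards [ae_mem_Ioc_lebI, (countable_singleton (1:ℝ)).ae_notMem lebI,
    hE.ae_notMem lebI] with m hm hm1 hmE
  have hm1 : m < 1 := lt_of_le_of_ne hm.2 hm1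
  have hc : ContinuousWithinAt Q (Ioc 0 1) m := by_contra fun h => hmE ⟨hm, h⟩
  have hright : Ioc m 1 ∈ 𝓝[>] m := Ioc_mem_nhdsGT hm1
  have hleft : Ioo 0 m ∈ 𝓝[<] m := Ioo_mem_nhdsLT hm.1
  apply le_antisymm
  · refine ge_of_tendsto (hc.mono_of_mem_nhdsWithin (s := Ioi m) ?_).tendsto ?_
    · exact mem_of_superset hright fun y hy => ⟨hm.1.trans hy.1, hy.2⟩
    · filter_upwards [hright] with y hy using quantile_map_lebI_le hQ hQAC hm ⟨hy.1.le, hy.2⟩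
  · refine le_of_tendsto (hc.mono_of_mem_nhdsWithin (s := Iio m) ?_).tendsto ?_
    · exact mem_of_superset hleft fun y hy => ⟨hy.1, hy.2.le.trans hm.2⟩
    · filter_upwards [hleft] with y hy using le_quantile_map_lebI hQ hQAC hm hy

end Comonotone

section QuantileIntegrals

variable {ν : Measure ℝ} [IsProbabilityMeasure ν] {A C : ℝ} (hν : ∀ᵐ x ∂ν, x ∈ Icc A C)
include hν

lemma Continuous.integrable_of_ae_mem_Icc {g : ℝ → ℝ} (hg : Continuous g) : Integrable g ν := by
  rw [← Measure.restrict_eq_self_of_ae_mem hν]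
  exact hg.continuousOn.integrableOn_compact isCompact_Icc

lemma integral_comp_quantile {g : ℝ → ℝ} (hg : Continuous g) :
    ∫ m, g (quantile ν m) ∂lebI = ∫ x, g x ∂ν := by
  conv_rhs => rw [← map_quantile hν]
  exact (integral_map (aemeasurable_quantile hν) hg.aestronglyMeasurable).symm

lemma integrable_quantile : Integrable (quantile ν) lebI := by
  have := continuous_id.integrable_of_ae_mem_Icc hν
  rw [← map_quantile hν] at this
  exact this.comp_aemeasurable (aemeasurable_quantile hν)

lemma setIntegral_quantile_le {U : Set ℝ} (hU : MeasurableSet U) (z : ℝ) :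
    ∫ m in U, quantile ν m ∂lebI ≤ z * lebI.real U + ∫ x, max (x - z) 0 ∂ν := by
  rw [← integral_comp_quantile hν (by fun_prop : Continuous fun x => max (x - z) 0)]
  exact setIntegral_le_mul_measureReal_add_integral_max_sub (integrable_quantile hν) hU z

lemma exists_setIntegral_quantile_eq {U : Set ℝ} (hU : IsUpperSet U) :
    ∃ z, ∫ m in U, quantile ν m ∂lebI = z * lebI.real U + ∫ x, max (x - z) 0 ∂ν := by
  obtain ⟨z, hz⟩ := exists_separating_of_monotoneOn (monotoneOn_quantile hν)
    (fun _ hm => quantile_mem_Icc hν hm) hU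
  refine ⟨z, ?_⟩
  rw [← integral_comp_quantile hν (by fun_prop : Continuous fun x => max (x - z) 0)]
  exact setIntegral_eq_mul_measureReal_add_integral_max_sub (integrable_quantile hν)
    hU.ordConnected.measurableSet (ae_mem_Ioc_lebI.mono fun m hm => hz m hm)

end QuantileIntegrals

section Coupling

variable {ι : Type*} [Fintype ι] {μ : ι → Measure ℝ} {a c : ι → ℝ}
  (hμ : ∀ i, ∀ᵐ x ∂μ i, x ∈ Icc (a i) (c i)) {γ : Measure (ι → ℝ)}
  (hγ : ∀ i, γ.map (fun y => y i) = μ i)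
include hμ hγ

lemma ae_map_sum_mem_Icc :
    ∀ᵐ x ∂γ.map (fun y => ∑ i, y i), x ∈ Icc (∑ i, a i) (∑ i, c i) := by
  have hbox : ∀ᵐ y ∂γ, ∀ i, y i ∈ Icc (a i) (c i) := ae_all_iff.2 fun i =>
    ae_of_ae_map (measurable_pi_apply i).aemeasurable (hγ i ▸ hμ i)
  refine (ae_map_iff (by fun_prop) measurableSet_Icc).2 (hbox.mono fun y hy => ?_)
  exact ⟨Finset.sum_le_sum fun i _ => (hy i).1, Finset.sum_le_sum fun i _ => (hy i).2⟩

variable [∀ i, IsProbabilityMeasure (μ i)]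

lemma integral_max_sum_sub_le (z : ι → ℝ) :
    ∫ x, max (x - ∑ i, z i) 0 ∂γ.map (fun y => ∑ i, y i)
      ≤ ∑ i, ∫ x, max (x - z i) 0 ∂μ i := by
  have hint : ∀ i, Integrable (fun y : ι → ℝ => max (y i - z i) 0) γ := fun i => by
    have := (by fun_prop : Continuous fun x => max (x - z i) 0).integrable_of_ae_mem_Icc (hμ i)
    rw [← hγ i] at this
    exact this.comp_aemeasurable (measurable_pi_apply i).aemeasurable
  rw [integral_map (by fun_prop) (by fun_prop)]
  calc ∫ y, max (∑ i, y i - ∑ i, z i) 0 ∂γ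
      ≤ ∫ y, ∑ i, max (y i - z i) 0 ∂γ := by
        refine integral_mono_of_nonneg (ae_of_all _ fun y => le_max_right _ _)
          (integrable_finsetSum _ fun i _ => hint i) (ae_of_all _ fun y => ?_)
        dsimp only
        rw [← Finset.sum_sub_distrib]
        exact max_le (Finset.sum_le_sum fun i _ => le_max_left _ _)
          (Finset.sum_nonneg fun i _ => le_max_right _ _)
    _ = ∑ i, ∫ x, max (x - z i) 0 ∂μ i := by
        rw [integral_finsetSum _ fun i _ => hint i]
        refine Finset.sum_congr rfl fun i _ => ?_
        rw [← hγ i, integral_map (measurable_pi_apply i).aemeasurable (by fun_prop)]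

lemma setIntegral_quantile_map_sum_le [IsProbabilityMeasure γ] {U : Set ℝ} (hU : IsUpperSet U) :
    ∫ m in U, quantile (γ.map (fun y => ∑ i, y i)) m ∂lebI
      ≤ ∑ i, ∫ m in U, quantile (μ i) m ∂lebI := by
  choose z hz using fun i => exists_setIntegral_quantile_eq (hμ i) hU
  have := Measure.isProbabilityMeasure_map (μ := γ)
    (by fun_prop : AEMeasurable (fun y : ι → ℝ => ∑ i, y i) γ)
  calc ∫ m in U, quantile (γ.map (fun y => ∑ i, y i)) m ∂lebI
      ≤ (∑ i, z i) * lebI.real U + ∫ x, max (x - ∑ i, z i) 0 ∂γ.map (fun y => ∑ i, y i) :=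
        setIntegral_quantile_le (ae_map_sum_mem_Icc hμ hγ) hU.ordConnected.measurableSet _
    _ ≤ (∑ i, z i) * lebI.real U + ∑ i, ∫ x, max (x - z i) 0 ∂μ i := by
        gcongr; exact integral_max_sum_sub_le hμ hγ z
    _ = ∑ i, ∫ m in U, quantile (μ i) m ∂lebI := by
        rw [Finset.sum_mul, ← Finset.sum_add_distrib]
        exact Finset.sum_congr rfl fun i _ => (hz i).symm

end Coupling

section SpectralRisk

variable {α : ℝ → ℝ}

lemma specRisk_congr {β : ℝ → ℝ} (ν : Measure ℝ) (h : EqOn α β (Icc 0 1)) :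
    specRisk α ν = specRisk β ν :=
  setIntegral_congr_fun measurableSet_Icc fun m hm => by rw [h hm]

variable {ν : Measure ℝ} [IsProbabilityMeasure ν] {A C : ℝ}

lemma integrable_quantile_mul_of_monotoneOn (hν : ∀ᵐ x ∂ν, x ∈ Icc A C)
    (hα : MonotoneOn α (Icc 0 1)) : Integrable (fun m => quantile ν m * α m) lebI :=
  (integrable_quantile hν).mul_bdd
    (aemeasurable_restrict_of_monotoneOn measurableSet_Icc hα).aestronglyMeasurable
    ((ae_restrict_mem measurableSet_Icc).mono fun _ hm => abs_le_max_abs_abs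
      (hα (left_mem_Icc.2 zero_le_one) hm hm.1) (hα hm (right_mem_Icc.2 zero_le_one) hm.2))

lemma specRisk_eq_integral_setIntegral_superlevel (hν : ∀ᵐ x ∂ν, x ∈ Icc A C)
    (hα : Monotone α) {M : ℝ} (hα0 : ∀ x, 0 ≤ α x) (hαM : ∀ x, α x ≤ M) :
    specRisk α ν = ∫ s in Ioo (0:ℝ) M, ∫ m in {m | s < α m}, quantile ν m ∂lebI :=
  integral_mul_eq_integral_setIntegral_superlevel (integrable_quantile hν) hα.measurable hα0 hαM

lemma specRisk_map_lebI {Q : ℝ → ℝ} (hQ : MonotoneOn Q (Ioc 0 1))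
    (hQAC : MapsTo Q (Ioc 0 1) (Icc A C)) :
    specRisk α (lebI.map Q) = ∫ m in Icc (0:ℝ) 1, α m * Q m :=
  integral_congr_ae ((quantile_map_lebI_ae_eq hQ hQAC).mono fun m hm => by
    simp only [hm, mul_comm])

variable {ι : Type*} [Fintype ι] {μ : ι → Measure ℝ} [∀ i, IsProbabilityMeasure (μ i)]
  {a c : ι → ℝ}

lemma integral_mul_sum_quantile (hμ : ∀ i, ∀ᵐ x ∂μ i, x ∈ Icc (a i) (c i))
    (hα : MonotoneOn α (Icc 0 1)) :
    ∫ m in Icc (0:ℝ) 1, α m * ∑ i, quantile (μ i) m = ∑ i, specRisk α (μ i) := by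
  simp_rw [Finset.mul_sum, mul_comm (α _)]
  exact integral_finsetSum _ fun i _ => integrable_quantile_mul_of_monotoneOn (hμ i) hα

lemma specRisk_map_sum_le (hμ : ∀ i, ∀ᵐ x ∂μ i, x ∈ Icc (a i) (c i)) {γ : Measure (ι → ℝ)}
    [IsProbabilityMeasure γ] (hγ : ∀ i, γ.map (fun y => y i) = μ i) (hα : Monotone α) {M : ℝ}
    (hα0 : ∀ x, 0 ≤ α x) (hαM : ∀ x, α x ≤ M) :
    specRisk α (γ.map fun y => ∑ i, y i) ≤ ∑ i, specRisk α (μ i) := by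
  have := Measure.isProbabilityMeasure_map (μ := γ)
    (by fun_prop : AEMeasurable (fun y : ι → ℝ => ∑ i, y i) γ)
  have hint : ∀ i, Integrable (fun s => ∫ m in {m | s < α m}, quantile (μ i) m ∂lebI)
      (volume.restrict (Ioo 0 M)) := fun i =>
    integrable_setIntegral_superlevel (integrable_quantile (hμ i)) hα.measurable M
  rw [specRisk_eq_integral_setIntegral_superlevel (ae_map_sum_mem_Icc hμ hγ) hα hα0 hαM]
  simp_rw [specRisk_eq_integral_setIntegral_superlevel (hμ _) hα hα0 hαM]
  rw [← integral_finsetSum _ fun i _ => hint i]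
  refine setIntegral_mono (integrable_setIntegral_superlevel
    (integrable_quantile (ae_map_sum_mem_Icc hμ hγ)) hα.measurable M)
    (integrable_finsetSum _ fun i _ => hint i) fun s => ?_
  exact setIntegral_quantile_map_sum_le hμ hγ fun x y hxy (hx : s < α x) => hx.trans_le (hα hxy)

lemma specRisk_map_sum_le_of_monotoneOn (hμ : ∀ i, ∀ᵐ x ∂μ i, x ∈ Icc (a i) (c i))
    {γ : Measure (ι → ℝ)} [IsProbabilityMeasure γ] (hγ : ∀ i, γ.map (fun y => y i) = μ i)
    (hα : MonotoneOn α (Icc 0 1)) (hα0 : ∀ m ∈ Icc (0:ℝ) 1, 0 ≤ α m) :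
    specRisk α (γ.map fun y => ∑ i, y i) ≤ ∑ i, specRisk α (μ i) := by
  set α' : ℝ → ℝ := fun m => α (projIcc 0 1 zero_le_one m)
  have hα' : EqOn α α' (Icc 0 1) := fun m hm => by simp only [α', projIcc_of_mem _ hm]
  simp_rw [specRisk_congr _ hα']
  exact specRisk_map_sum_le hμ hγ (hα.comp_projIcc zero_le_one)
    (fun x => hα0 _ (projIcc 0 1 zero_le_one x).2)
    (fun x => hα (projIcc 0 1 zero_le_one x).2 (right_mem_Icc.2 zero_le_one)
      (projIcc 0 1 zero_le_one x).2.2)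

end SpectralRisk

section ComonotoneCoupling

noncomputable def comonotoneCoupling {ι : Type*} (μ : ι → Measure ℝ) : Measure (ι → ℝ) :=
  lebI.map fun m i => quantile (μ i) m

variable {ι : Type*} [Fintype ι] {μ : ι → Measure ℝ} [∀ i, IsProbabilityMeasure (μ i)]
  {a c : ι → ℝ} (hμ : ∀ i, ∀ᵐ x ∂μ i, x ∈ Icc (a i) (c i))
include hμ

lemma aemeasurable_comonotoneCoupling : AEMeasurable (fun m i => quantile (μ i) m) lebI :=
  aemeasurable_pi_lambda _ fun i => aemeasurable_quantile (hμ i)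

lemma isProbabilityMeasure_comonotoneCoupling : IsProbabilityMeasure (comonotoneCoupling μ) :=
  Measure.isProbabilityMeasure_map (aemeasurable_comonotoneCoupling hμ)

lemma map_eval_comonotoneCoupling (i : ι) : (comonotoneCoupling μ).map (fun y => y i) = μ i := by
  rw [comonotoneCoupling, AEMeasurable.map_map_of_aemeasurable
    (measurable_pi_apply i).aemeasurable (aemeasurable_comonotoneCoupling hμ)]
  exact map_quantile (hμ i)

lemma specRisk_map_sum_comonotoneCoupling (α : ℝ → ℝ) :
    specRisk α ((comonotoneCoupling μ).map fun y => ∑ i, y i)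
      = ∫ m in Icc (0:ℝ) 1, α m * ∑ i, quantile (μ i) m := by
  rw [comonotoneCoupling, AEMeasurable.map_map_of_aemeasurable (by fun_prop)
    (aemeasurable_comonotoneCoupling hμ)]
  refine specRisk_map_lebI (A := ∑ i, a i) (C := ∑ i, c i)
    (fun m hm m' hm' h => Finset.sum_le_sum fun i _ => monotoneOn_quantile (hμ i) hm hm' h)
    fun m hm => ⟨Finset.sum_le_sum fun i _ => (quantile_mem_Icc (hμ i) hm).1,
      Finset.sum_le_sum fun i _ => (quantile_mem_Icc (hμ i) hm).2⟩

end ComonotoneCoupling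

theorem stmt11_general (d : ℕ) (a c : Fin d → ℝ)
    (μ : Fin d → Measure ℝ) (hprob : ∀ i, IsProbabilityMeasure (μ i))
    (hsupp : ∀ i, μ i (Icc (a i) (c i)) = 1)
    (α : ℝ → ℝ) (hα_mono : MonotoneOn α (Icc 0 1))
    (hα_nonneg : ∀ m ∈ Icc (0:ℝ) 1, 0 ≤ α m)
    (b : (Fin d → ℝ) → ℝ) (hb : b = fun x => ∑ i, x i)
    (γ : Measure (Fin d → ℝ)) (hγ : γ = lebI.map (fun m i => quantile (μ i) m)) :
    (IsProbabilityMeasure γ ∧ ∀ i, γ.map (fun z => z i) = μ i) ∧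
    (∀ γ' : Measure (Fin d → ℝ), IsProbabilityMeasure γ' →
      (∀ i, γ'.map (fun z => z i) = μ i) →
      specRisk α (γ'.map b) ≤ specRisk α (γ.map b)) ∧
    (specRisk α (γ.map b) = ∫ m in Icc (0:ℝ) 1, α m * ∑ i, quantile (μ i) m) ∧
    ((∫ m in Icc (0:ℝ) 1, α m * ∑ i, quantile (μ i) m) = ∑ i, specRisk α (μ i)) := by
  have hμ : ∀ i, ∀ᵐ x ∂μ i, x ∈ Icc (a i) (c i) := fun i =>
    mem_ae_iff.2 ((prob_compl_eq_zero_iff measurableSet_Icc).2 (hsupp i))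
  obtain rfl : γ = comonotoneCoupling μ := hγ
  subst hb
  have hvalue := specRisk_map_sum_comonotoneCoupling hμ α
  have hsplit := integral_mul_sum_quantile hμ hα_mono
  refine ⟨⟨isProbabilityMeasure_comonotoneCoupling hμ, map_eval_comonotoneCoupling hμ⟩,
    fun γ' _ hγ' => ?_, hvalue, hsplit⟩
  rw [hvalue, hsplit]
  exact specRisk_map_sum_le_of_monotoneOn hμ hγ' hα_mono hα_nonneg

/-- for `b(x_1,...,x_d) = x_1 + ⋯ + x_d` on a product of compact real
intervals, the comonotone coupling `(F_{μ_1}⁻¹,...,F_{μ_d}⁻¹)_# Leb_{[0,1]}`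
maximizes `γ ↦ R_α(b_# γ)` over `Γ(μ_1,...,μ_d)`, with maximal value
`∫_0^1 α(m) Σ_i F_{μ_i}⁻¹(m) dm = Σ_i R_α(μ_i)`. -/
theorem stmt11 (d : ℕ) (a c : Fin d → ℝ) (hac : ∀ i, a i ≤ c i)
    (μ : Fin d → Measure ℝ) (hprob : ∀ i, IsProbabilityMeasure (μ i))
    (hsupp : ∀ i, μ i (Icc (a i) (c i)) = 1)
    (α : ℝ → ℝ) (hα_mono : MonotoneOn α (Icc 0 1))
    (hα_nonneg : ∀ m ∈ Icc (0:ℝ) 1, 0 ≤ α m)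
    (b : (Fin d → ℝ) → ℝ) (hb : b = fun x => ∑ i, x i)
    (γ : Measure (Fin d → ℝ)) (hγ : γ = lebI.map (fun m i => quantile (μ i) m)) :
    (IsProbabilityMeasure γ ∧ ∀ i, γ.map (fun z => z i) = μ i) ∧
    (∀ γ' : Measure (Fin d → ℝ), IsProbabilityMeasure γ' →
      (∀ i, γ'.map (fun z => z i) = μ i) →
      specRisk α (γ'.map b) ≤ specRisk α (γ.map b)) ∧
    (specRisk α (γ.map b) = ∫ m in Icc (0:ℝ) 1, α m * ∑ i, quantile (μ i) m) ∧
    ((∫ m in Icc (0:ℝ) 1, α m * ∑ i, quantile (μ i) m) = ∑ i, specRisk α (μ i)) :=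
  stmt11_general d a c μ hprob hsupp α hα_mono hα_nonneg b hb γ hγ
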